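/- Let k be a positive integer. If X is an S(2k)-space, then |X| ≤ 2^{c_{2k}(X)·χ_{2k}(X)}. -/

import Mathlib

open Cardinal Set

universe u

variable {X : Type u}

/-- `x` is S(n)-separated from `A`. -/
def SSep [TopologicalSpace X] : ℕ → X → Set X → Prop
  | 0, x, A => x ∉ closure A
  | (n+1), x, A => ∃ U : ℕ → Set X, (∀ i ≤ n, IsOpen (U i)) ∧ x ∈ U 0 ∧
      (∀ i < n, closure (U i) ⊆ U (i+1)) ∧ closure (U n) ∩ A = ∅

/-- `X` is an S(n)-space. -/
def SSpace (n : ℕ) (X : Type u) [TopologicalSpace X] : Prop :=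
  ∀ x y : X, x ≠ y → SSep n x {y}

/-- `U` is an S(2k-1)-neighborhood of `x` (for `k ≥ 1`). -/
def SOddNhd [TopologicalSpace X] (k : ℕ) (x : X) (U : Set X) : Prop :=
  ∃ V : ℕ → Set X, (∀ i < k, IsOpen (V i)) ∧ x ∈ V 0 ∧
    (∀ i, i + 1 < k → closure (V i) ⊆ V (i+1)) ∧ V (k-1) ⊆ U

/-- `U` is an S(2k)-neighborhood of `x` (for `k ≥ 1`). -/
def SEvenNhd [TopologicalSpace X] (k : ℕ) (x : X) (U : Set X) : Prop :=
  ∃ V : ℕ → Set X, (∀ i < k, IsOpen (V i)) ∧ x ∈ V 0 ∧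
    (∀ i, i + 1 < k → closure (V i) ⊆ V (i+1)) ∧ closure (V (k-1)) ⊆ U

/-- `U` is an open S(2k-1)-neighborhood of `x`. -/
def SOpenNhd [TopologicalSpace X] (k : ℕ) (x : X) (U : Set X) : Prop :=
  IsOpen U ∧ SOddNhd k x U

/-- `U` is an S(2k-1)-open set. -/
def SOpen [TopologicalSpace X] (k : ℕ) (U : Set X) : Prop :=
  IsOpen U ∧ ∃ x, SOddNhd k x U

/-- The S(2k-1)-closure `θ_{2k-1}(A)`. -/
def thetaOdd [TopologicalSpace X] (k : ℕ) (A : Set X) : Set X :=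
  {x | ∀ U : Set X, SOpenNhd k x U → (U ∩ A).Nonempty}

/-- The S(2k)-closure `θ_{2k}(A)`. -/
def thetaEven [TopologicalSpace X] (k : ℕ) (A : Set X) : Set X :=
  {x | ∀ U : Set X, SOpenNhd k x U → (closure U ∩ A).Nonempty}

/-- `D` is S(2k-1)-discrete. -/
def SOddDiscrete [TopologicalSpace X] (k : ℕ) (D : Set X) : Prop :=
  ∀ x ∈ D, ∃ U : Set X, SOpenNhd k x U ∧ U ∩ D = {x}

/-- `D` is S(2k)-discrete. -/
def SEvenDiscrete [TopologicalSpace X] (k : ℕ) (D : Set X) : Prop :=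
  ∀ x ∈ D, ∃ U : Set X, SOpenNhd k x U ∧ closure U ∩ D = {x}

/-- The S(2k-1)-spread `s_{2k-1}(X)`. -/
noncomputable def spreadOdd (k : ℕ) (X : Type u) [TopologicalSpace X] : Cardinal :=
  (⨆ D : {D : Set X // SOddDiscrete k D}, #D.1) ⊔ Cardinal.aleph0

/-- The S(2k)-spread `s_{2k}(X)`. -/
noncomputable def spreadEven (k : ℕ) (X : Type u) [TopologicalSpace X] : Cardinal :=
  (⨆ D : {D : Set X // SEvenDiscrete k D}, #D.1) ⊔ Cardinal.aleph0

/-- The S(2k-1)-cellularity `c_{2k-1}(X)`. -/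
noncomputable def cellOdd (k : ℕ) (X : Type u) [TopologicalSpace X] : Cardinal :=
  (⨆ F : {F : Set (Set X) // (∀ U ∈ F, SOpen k U ∧ U.Nonempty) ∧
      (∀ U ∈ F, ∀ V ∈ F, U ≠ V → U ∩ V = ∅)}, #F.1) ⊔ Cardinal.aleph0

/-- The S(2k)-cellularity `c_{2k}(X)`. -/
noncomputable def cellEven (k : ℕ) (X : Type u) [TopologicalSpace X] : Cardinal :=
  (⨆ F : {F : Set (Set X) // (∀ U ∈ F, SOpen k U ∧ U.Nonempty) ∧
      (∀ U ∈ F, ∀ V ∈ F, U ≠ V → closure U ∩ closure V = ∅)}, #F.1) ⊔ Cardinal.aleph0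

/-- The S(2k-1)-character `χ_{2k-1}(X)`. -/
noncomputable def charOdd (k : ℕ) (X : Type u) [TopologicalSpace X] : Cardinal :=
  sInf {c | Cardinal.aleph0 ≤ c ∧ ∀ x : X, ∃ B : Set (Set X), #B ≤ c ∧
    (∀ U ∈ B, SOpenNhd k x U) ∧
    ∀ U : Set X, SOpenNhd k x U → ∃ V ∈ B, V ⊆ U}

/-- The S(2k)-character `χ_{2k}(X)`. -/
noncomputable def charEven (k : ℕ) (X : Type u) [TopologicalSpace X] : Cardinal :=
  sInf {c | Cardinal.aleph0 ≤ c ∧ ∀ x : X, ∃ B : Set (Set X), #B ≤ c ∧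
    (∀ V ∈ B, IsClosed V ∧ SOddNhd k x V) ∧
    ∀ W : Set X, SOpenNhd k x W → ∃ V ∈ B, V ⊆ closure W}

/-- The S(2k-1)-pseudocharacter `ψ_{2k-1}(X)`. -/
noncomputable def psiOdd (k : ℕ) (X : Type u) [TopologicalSpace X] : Cardinal :=
  sInf {c | Cardinal.aleph0 ≤ c ∧ ∀ x : X, ∃ B : Set (Set X), #B ≤ c ∧
    (∀ U ∈ B, SOpenNhd k x U) ∧ ⋂₀ B = {x}}

/-- The S(2k)-pseudocharacter `ψ_{2k}(X)`. -/
noncomputable def psiEven (k : ℕ) (X : Type u) [TopologicalSpace X] : Cardinal :=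
  sInf {c | Cardinal.aleph0 ≤ c ∧ ∀ x : X, ∃ B : Set (Set X), #B ≤ c ∧
    (∀ U ∈ B, SOpenNhd k x U) ∧ (⋂ U ∈ B, closure U) = {x}}

/-- The usual pseudocharacter `ψ(X)`. -/
noncomputable def psi (X : Type u) [TopologicalSpace X] : Cardinal :=
  sInf {c | Cardinal.aleph0 ≤ c ∧ ∀ x : X, ∃ B : Set (Set X), #B ≤ c ∧
    (∀ U ∈ B, IsOpen U) ∧ ⋂₀ B = {x}}

/-!
Fix at every point a closed S(2k-1)-neighbourhood base of size `μ = χ_{2k}(X)`, all indexed by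
one set of size `μ`. In an S(2k)-space two distinct points `x, y` have basic neighbourhoods
`V_x(a)`, `V_y(b)` that are disjoint; colour the ordered pair `(x, y)` by `(a, b)`. If
`|X| > 2^κ` with `κ = c_{2k}(X) · χ_{2k}(X)`, the Erdős–Rado theorem `2^κ → (κ⁺)²_κ` yields
more than `κ` points, linearly ordered, on which the colour is a constant `(a, b)`. Open
S(2k-1)-neighbourhoods `G_t ⊆ V_t(a) ∩ V_t(b)` then have pairwise disjoint closures, since
`V_s(a) ∩ V_t(b) = ∅` for `s < t`, contradicting `c_{2k}(X) ≤ κ`.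
-/

namespace ErdosRado

variable {I W : Type u} (c : X → X → I)

section Branch

variable [LinearOrder W] [WellFoundedLT W]

/-- The end-homogeneous sequence towards `x`: each term is chosen among the points that all
earlier terms colour as they colour `x`. If every point occurs in its own sequence, it is
determined by the colours along that sequence, which bounds `#X`; otherwise some sequence is
injective and end-homogeneous, and pigeonhole finishes the Erdős–Rado argument. -/
noncomputable def branch (x : X) : W → X :=
  WellFoundedLT.fix fun w prev =>
    @Classical.epsilon X ⟨x⟩ fun y =>
      ∀ v (hv : v < w), prev v hv ≠ y ∧ c (prev v hv) y = c (prev v hv) x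

def candidates (x : X) (w : W) : Set X :=
  {y | ∀ v < w, branch c x v ≠ y ∧ c (branch c x v) y = c (branch c x v) x}

theorem branch_eq (x : X) (w : W) :
    branch c x w = @Classical.epsilon X ⟨x⟩ (· ∈ candidates c x w) := by
  rw [branch, WellFoundedLT.fix_eq]
  rfl

theorem branch_mem_candidates {x : X} {w : W} (h : (candidates c x w).Nonempty) :
    branch c x w ∈ candidates c x w := by
  rw [branch_eq]
  exact Classical.epsilon_spec h

theorem branch_congr {x x' : X} (w : W)
    (h : ∀ v < w, c (branch c x v) x = c (branch c x' v) x') :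
    branch c x w = branch c x' w := by
  induction w using WellFoundedLT.induction with
  | _ w ih =>
    have hprev : ∀ v < w, branch c x v = branch c x' v := fun v hv =>
      ih v hv fun u hu => h u (hu.trans hv)
    have hcand : candidates c x w = candidates c x' w := by
      ext y
      refine forall₂_congr fun v hv => ?_
      rw [h v hv, hprev v hv]
    rw [branch_eq, branch_eq, hcand]

theorem mk_le_two_power_of_forall_exists_branch_eq {κ : Cardinal.{u}} (hκ : ℵ₀ ≤ κ)
    (hI : #I ≤ κ) (hW : #W ≤ 2 ^ κ) (hIio : ∀ w : W, #(Iio w) ≤ κ)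
    (hreach : ∀ x, ∃ w : W, branch c x w = x) : #X ≤ 2 ^ κ := by
  choose h hh using hreach
  let E : X → Set (W × I) := fun x => {p | p.1 < h x ∧ p.2 = c (branch c x p.1) x}
  have h_le_of_subset : ∀ {x x'}, E x ⊆ E x' → h x ≤ h x' := fun {x x'} hE =>
    not_lt.mp fun hlt =>
      lt_irrefl _ (hE (show (h x', c (branch c x (h x')) x) ∈ E x from ⟨hlt, rfl⟩)).1
  have hE_inj : Function.Injective E := by
    intro x x' hE
    have hhx : h x = h x' := le_antisymm (h_le_of_subset hE.le) (h_le_of_subset hE.ge)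
    have hcol : ∀ v < h x, c (branch c x v) x = c (branch c x' v) x' := fun v hv =>
      (show (v, c (branch c x v) x) ∈ E x' from hE ▸ ⟨hv, rfl⟩).2
    calc x = branch c x (h x) := (hh x).symm
      _ = branch c x' (h x') := hhx ▸ branch_congr c _ hcol
      _ = x' := hh x'
  have hE_card : ∀ x, #(E x) ≤ κ := by
    intro x
    refine (mk_le_of_injective (f := fun p : E x => (⟨p.1.1, p.2.1⟩ : Iio (h x))) ?_).trans
      (hIio _)
    rintro ⟨⟨v, i⟩, _, hi⟩ ⟨⟨w, j⟩, _, hj⟩ hvw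
    obtain rfl : v = w := congrArg Subtype.val hvw
    obtain rfl : i = j := hi.trans hj.symm
    rfl
  have hWI : #(W × I) ≤ 2 ^ κ := by
    rw [mk_prod, lift_id, lift_id, ← mul_eq_self (hκ.trans (cantor κ).le)]
    exact mul_le_mul' hW (hI.trans (cantor κ).le)
  calc #X ≤ #{s : Set (W × I) // #s ≤ κ} :=
        mk_le_of_injective (f := fun x => ⟨E x, hE_card x⟩) fun x x' hxx' =>
          hE_inj (congrArg Subtype.val hxx')
    _ ≤ max #(W × I) ℵ₀ ^ κ := mk_bounded_set_le _ _
    _ ≤ (2 ^ κ) ^ κ := power_le_power_right (max_le hWI (hκ.trans (cantor κ).le))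
    _ = 2 ^ κ := by rw [← power_mul, mul_eq_self hκ]

variable {c} {x : X} (hx : ∀ w : W, branch c x w ≠ x)
include hx

theorem branch_mem_candidates_of_forall_ne (w : W) : branch c x w ∈ candidates c x w :=
  branch_mem_candidates c ⟨x, fun v _ => ⟨hx v, rfl⟩⟩

theorem branch_injective_of_forall_ne : Function.Injective (branch c x : W → X) :=
  .of_lt_imp_ne fun _ _ hvw => (branch_mem_candidates_of_forall_ne hx _ _ hvw).1

theorem color_branch_of_lt {v w : W} (hvw : v < w) :
    c (branch c x v) (branch c x w) = c (branch c x v) x :=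
  (branch_mem_candidates_of_forall_ne hx _ _ hvw).2

end Branch

theorem exists_homogeneous_of_two_power_lt {κ : Cardinal.{u}} (hκ : ℵ₀ ≤ κ) (hI : #I ≤ κ)
    (hX : 2 ^ κ < #X) :
    ∃ (i : I) (T : Type u) (_ : LinearOrder T) (f : T ↪ X),
      κ < #T ∧ ∀ a b : T, a < b → c (f a) (f b) = i := by
  have hW : #(Order.succ κ).ord.ToType = Order.succ κ := mk_ord_toType _
  obtain ⟨x, hx⟩ : ∃ x, ∀ w : (Order.succ κ).ord.ToType, branch c x w ≠ x := by
    by_contra! hreach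
    refine hX.not_ge (mk_le_two_power_of_forall_exists_branch_eq c hκ hI ?_ (fun w => ?_) hreach)
    · exact hW.le.trans (Order.succ_le_of_lt (cantor κ))
    · have hIio := mk_Iio_lt w (by simp)
      rw [hW] at hIio
      exact Order.lt_succ_iff.mp hIio
  obtain ⟨i, hi⟩ := infinite_pigeonhole_card (fun w => c (branch c x w) x) (Order.succ κ) hW.ge
    (hκ.trans (Order.le_succ κ))
    (by rw [(isRegular_succ hκ).cof_ord]; exact hI.trans_lt (Order.lt_succ κ))
  refine ⟨i, _, inferInstance, ⟨fun w => branch c x w.1, fun v w hvw =>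
    Subtype.ext (branch_injective_of_forall_ne hx hvw)⟩, (Order.lt_succ κ).trans_le hi, ?_⟩
  rintro ⟨v, hv⟩ ⟨w, _⟩ hvw
  exact (color_branch_of_lt hx hvw).trans hv

end ErdosRado

section SNeighborhoods

variable [TopologicalSpace X] {k : ℕ} {x : X} {U U' : Set X}

theorem SOddNhd.mono (h : SOddNhd k x U) (hUU' : U ⊆ U') : SOddNhd k x U' :=
  let ⟨V, hV, hx, hchain, hU⟩ := h
  ⟨V, hV, hx, hchain, hU.trans hUU'⟩

theorem SOddNhd.inter (h : SOddNhd k x U) (h' : SOddNhd k x U') : SOddNhd k x (U ∩ U') := by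
  obtain ⟨V, hV, hx, hchain, hU⟩ := h
  obtain ⟨V', hV', hx', hchain', hU'⟩ := h'
  exact ⟨fun i => V i ∩ V' i, fun i hi => (hV i hi).inter (hV' i hi), ⟨hx, hx'⟩,
    fun i hi => closure_inter_subset_inter_closure _ _ |>.trans
      (inter_subset_inter (hchain i hi) (hchain' i hi)), inter_subset_inter hU hU'⟩

theorem SOddNhd.mem (h : SOddNhd k x U) : x ∈ U := by
  obtain ⟨V, -, hx, hchain, hU⟩ := h
  suffices ∀ i ≤ k - 1, x ∈ V i from hU (this _ le_rfl)
  intro i hi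
  induction i with
  | zero => exact hx
  | succ i ih => exact hchain i (by omega) (subset_closure (ih (by omega)))

theorem SOddNhd.exists_sOpenNhd_subset (hk : 1 ≤ k) (h : SOddNhd k x U) :
    ∃ O ⊆ U, SOpenNhd k x O := by
  obtain ⟨V, hV, hx, hchain, hU⟩ := h
  exact ⟨V (k - 1), hU, hV _ (by omega), V, hV, hx, hchain, subset_rfl⟩

theorem sOpenNhd_univ : SOpenNhd k x univ :=
  ⟨isOpen_univ, fun _ => univ, fun _ _ => isOpen_univ, mem_univ x, fun _ _ => subset_univ _,
    subset_rfl⟩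

theorem SSpace.exists_sOpenNhd_disjoint_closure (hk : 1 ≤ k) (hX : SSpace (2 * k) X)
    {x y : X} (hxy : x ≠ y) :
    ∃ A B : Set X, SOpenNhd k x A ∧ SOpenNhd k y B ∧ Disjoint (closure A) (closure B) := by
  set m := 2 * k - 1
  obtain ⟨U, hU, hx, hchain, hy⟩ : SSep (m + 1) x {y} := by
    rw [show m + 1 = 2 * k by omega]
    exact hX x y hxy
  have closure_compl_closure_subset : ∀ i ≤ m, closure (closure (U i))ᶜ ⊆ (U i)ᶜ := fun i hi =>
    closure_minimal (compl_subset_compl.mpr subset_closure) (hU i hi).isClosed_compl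
  -- Around `y`, the complements of the closures of the `U i`, taken in reverse order.
  have hB : SOddNhd k y (closure (U k))ᶜ := by
    refine ⟨fun i => (closure (U (m - i)))ᶜ, fun i _ => isClosed_closure.isOpen_compl, ?_,
      fun i hi => ?_, by simp only [show m - (k - 1) = k by omega, subset_rfl]⟩
    · simpa using hy
    · have hstep := hchain (m - (i + 1)) (by omega)
      rw [show m - (i + 1) + 1 = m - i by omega] at hstep
      exact (closure_compl_closure_subset _ (by omega)).trans (compl_subset_compl.mpr hstep)
  refine ⟨U (k - 1), (closure (U k))ᶜ, ⟨hU _ (by omega), U, fun i hi => hU i (by omega), hx,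
    fun i hi => hchain i (by omega), subset_rfl⟩, ⟨isClosed_closure.isOpen_compl, hB⟩, ?_⟩
  have hA : closure (U (k - 1)) ⊆ U k := by
    simpa only [show k - 1 + 1 = k by omega] using hchain (k - 1) (by omega)
  exact disjoint_compl_right.mono hA (closure_compl_closure_subset k (by omega))

end SNeighborhoods

theorem aleph0_le_cellEven (k : ℕ) (X : Type u) [TopologicalSpace X] : ℵ₀ ≤ cellEven k X :=
  le_sup_right

theorem mk_le_cellEven {k : ℕ} {X T : Type u} [TopologicalSpace X] (G : T → Set X)
    (hG : ∀ t, SOpen k (G t) ∧ (G t).Nonempty)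
    (hdisj : Pairwise fun s t => Disjoint (closure (G s)) (closure (G t))) :
    #T ≤ cellEven k X := by
  have hG_inj : Function.Injective G := fun s t hst => by_contra fun hne =>
    have ⟨y, hy⟩ := (hG s).2
    (hdisj hne).ne_of_mem (subset_closure hy) (hst ▸ subset_closure hy) rfl
  rw [← mk_range_eq G hG_inj]
  refine le_sup_of_le_left (le_ciSup_of_le bddAbove_of_small ⟨range G, ?_, ?_⟩ le_rfl)
  · rintro _ ⟨t, rfl⟩
    exact hG t
  · rintro _ ⟨s, rfl⟩ _ ⟨t, rfl⟩ hst
    exact disjoint_iff_inter_eq_empty.mp (hdisj fun h => hst (congrArg G h))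

theorem mk_le_cellEven_of_forall_lt_disjoint {k : ℕ} (hk : 1 ≤ k) {X T : Type u}
    [TopologicalSpace X] [LinearOrder T] (p : T → X) (A B : T → Set X)
    (hA : ∀ t, IsClosed (A t) ∧ SOddNhd k (p t) (A t))
    (hB : ∀ t, IsClosed (B t) ∧ SOddNhd k (p t) (B t))
    (hAB : ∀ s t, s < t → Disjoint (A s) (B t)) :
    #T ≤ cellEven k X := by
  choose G hG_sub hG using fun t => ((hA t).2.inter (hB t).2).exists_sOpenNhd_subset hk
  have hG_closure : ∀ t, closure (G t) ⊆ A t ∩ B t := fun t =>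
    closure_minimal (hG_sub t) ((hA t).1.inter (hB t).1)
  have hG_disj : ∀ s t, s < t → Disjoint (closure (G s)) (closure (G t)) := fun s t hst =>
    (hAB s t hst).mono ((hG_closure s).trans inter_subset_left)
      ((hG_closure t).trans inter_subset_right)
  refine mk_le_cellEven G (fun t => ⟨⟨(hG t).1, p t, (hG t).2⟩, p t, (hG t).2.mem⟩)
    fun s t hst => ?_
  rcases hst.lt_or_gt with hst | hts
  · exact hG_disj s t hst
  · exact (hG_disj t s hts).symm

theorem charEven_spec (k : ℕ) (X : Type u) [TopologicalSpace X] :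
    ℵ₀ ≤ charEven k X ∧ ∀ x : X, ∃ B : Set (Set X), #B ≤ charEven k X ∧
      (∀ V ∈ B, IsClosed V ∧ SOddNhd k x V) ∧
      ∀ W : Set X, SOpenNhd k x W → ∃ V ∈ B, V ⊆ closure W := by
  have : charEven k X ∈ _ := csInf_mem (α := Cardinal)
    ⟨max ℵ₀ #(Set X), le_max_left _ _, fun x => ⟨{V | IsClosed V ∧ SOddNhd k x V},
      (mk_set_le _).trans (le_max_right _ _), fun _ hV => hV, fun W hW =>
      ⟨closure W, ⟨isClosed_closure, hW.2.mono subset_closure⟩, subset_rfl⟩⟩⟩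
  exact this

theorem aleph0_le_charEven (k : ℕ) (X : Type u) [TopologicalSpace X] : ℵ₀ ≤ charEven k X :=
  (charEven_spec k X).1

theorem exists_sOddNhd_closed_base (k : ℕ) (X : Type u) [TopologicalSpace X] (x : X) :
    ∃ V : (charEven k X).out → Set X, (∀ a, IsClosed (V a) ∧ SOddNhd k x (V a)) ∧
      ∀ W : Set X, SOpenNhd k x W → ∃ a, V a ⊆ closure W := by
  obtain ⟨B, hB_card, hB, hB_base⟩ := (charEven_spec k X).2 x
  obtain ⟨V₀, hV₀, -⟩ := hB_base univ sOpenNhd_univ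
  have : Nonempty B := ⟨⟨V₀, hV₀⟩⟩
  obtain ⟨ι⟩ : Nonempty (B ↪ (charEven k X).out) := by
    rwa [← le_def, mk_out]
  refine ⟨fun a => (Function.invFun ι a).1, fun a => hB _ (Function.invFun ι a).2,
    fun W hW => ?_⟩
  obtain ⟨V, hV, hVW⟩ := hB_base W hW
  obtain ⟨a, ha⟩ := Function.invFun_surjective ι.injective ⟨V, hV⟩
  refine ⟨a, ?_⟩
  dsimp only
  rwa [ha]

theorem stmt7 (k : ℕ) (hk : 1 ≤ k) (X : Type u) [TopologicalSpace X]
    (h : SSpace (2 * k) X) :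
    #X ≤ 2 ^ (cellEven k X * charEven k X) := by
  set μ := charEven k X
  set κ := cellEven k X * μ
  have hμ : ℵ₀ ≤ μ := aleph0_le_charEven k X
  have hc : ℵ₀ ≤ cellEven k X := aleph0_le_cellEven k X
  have hκ : ℵ₀ ≤ κ := hμ.trans (le_mul_left (aleph0_pos.trans_le hc).ne')
  have hI : #(μ.out × μ.out) ≤ κ := by
    rw [mk_prod, lift_id, mk_out, mul_eq_self hμ]
    exact le_mul_left (aleph0_pos.trans_le hc).ne'
  have := nonempty_out (aleph0_pos.trans_le hμ).ne'
  choose V hV hV_base using exists_sOddNhd_closed_base k X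
  have hsep : ∀ x y : X, x ≠ y → ∃ ab : μ.out × μ.out, Disjoint (V x ab.1) (V y ab.2) := by
    intro x y hxy
    obtain ⟨A, B, hA, hB, hAB⟩ := h.exists_sOpenNhd_disjoint_closure hk hxy
    obtain ⟨a, ha⟩ := hV_base x A hA
    obtain ⟨b, hb⟩ := hV_base y B hB
    exact ⟨(a, b), hAB.mono ha hb⟩
  choose! colour hcolour using hsep
  by_contra! hlt
  obtain ⟨⟨a, b⟩, T, _, f, hT, hhom⟩ :=
    ErdosRado.exists_homogeneous_of_two_power_lt colour hκ hI hlt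
  refine hT.not_ge ((mk_le_cellEven_of_forall_lt_disjoint hk f (fun t => V (f t) a)
    (fun t => V (f t) b) (fun t => hV _ a) (fun t => hV _ b) fun s t hst => ?_).trans
      (le_mul_right (aleph0_pos.trans_le hμ).ne'))
  simpa [hhom s t hst] using hcolour (f s) (f t) (f.injective.ne hst.ne)
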